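/- arXiv:2101.09326 — 2 statements merged into one kernel-verified Lean document; each statement's English description precedes it below -/
import Mathlib

section
/- Let X and Y be connected finite polyhedra and let f: X → D_n(Y) be an n-valued map. Then f has a proper partition if and only if there exist positive integers m and l with m + l = n and a continuous map f̂: X → D_{m,l}(Y) with t_{m,l} ∘ f̂ = f. -/
/-!
A proper partition of `f` contains an `m`-valued submap `f₁` with `0 < m < n`, and conversely a
lift `f̂` splits `f` into the two submaps read off from its two blocks. The substance is continuity
of the lift sending `x` to `f(x)` with `f₁(x)` as first block. For Hausdorff `Y` the map
`D_{m,l}(Y) → D_m(Y) × D_n(Y)`, `z ↦ (first block of z, t z)`, is inducing: if the points of a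
configuration have pairwise disjoint neighbourhoods `U_i`, a configuration meeting every `U_i` has
exactly one point in each, and its first block meeting every `U_i` with `i < m` pins down which
of these points form the first block. Hence the lift is continuous, since its composite with
this map is `x ↦ (f₁ x, f x)`.
-/

open Function Set

/-- The ordered configuration space of `n` points in `Y`. -/
def OrdConf (n : ℕ) (Y : Type*) [TopologicalSpace Y] : Type _ :=
  {y : Fin n → Y // Function.Injective y}

instance (n : ℕ) (Y : Type*) [TopologicalSpace Y] : TopologicalSpace (OrdConf n Y) :=
  instTopologicalSpaceSubtype

/-- Two ordered configurations are equivalent when they differ by a permutation. -/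
def confSetoid (n : ℕ) (Y : Type*) [TopologicalSpace Y] : Setoid (OrdConf n Y) where
  r a b := ∃ σ : Equiv.Perm (Fin n), a.1 ∘ σ = b.1
  iseqv := by
    constructor
    · intro a; exact ⟨Equiv.refl _, rfl⟩
    · rintro a b ⟨σ, h⟩
      refine ⟨σ.symm, funext fun i => ?_⟩
      have := congrFun h (σ.symm i)
      simpa using this.symm
    · rintro a b c ⟨σ, h1⟩ ⟨τ, h2⟩
      refine ⟨τ.trans σ, funext fun i => ?_⟩
      have h1' := congrFun h1 (τ i)
      have h2' := congrFun h2 i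
      simp only [Function.comp_apply] at h1' h2' ⊢
      simp [Equiv.trans_apply, h1', h2']

/-- The unordered configuration space `D_n(Y)` of `n` points in `Y`,
with the quotient topology. -/
def UnordConf (n : ℕ) (Y : Type*) [TopologicalSpace Y] : Type _ :=
  Quotient (confSetoid n Y)

instance (n : ℕ) (Y : Type*) [TopologicalSpace Y] : TopologicalSpace (UnordConf n Y) :=
  instTopologicalSpaceQuotient

/-- The underlying `n`-element subset of `Y` determined by an unordered configuration. -/
def UnordConf.values {n : ℕ} {Y : Type*} [TopologicalSpace Y] : UnordConf n Y → Set Y :=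
  Quotient.lift (fun a => Set.range a.1) (by
    rintro a b ⟨σ, h⟩
    show Set.range a.1 = Set.range b.1
    rw [← h, Set.range_comp]
    simp)

/-- An `n`-valued map from `X` to `Y` is a continuous map `X → D_n(Y)`. -/
abbrev NValuedMap (X Y : Type*) [TopologicalSpace X] [TopologicalSpace Y] (n : ℕ) :=
  C(X, UnordConf n Y)

/-- `g` is a submap of `f` when `g(x) ⊆ f(x)` for all `x`. -/
def IsSubmap {X Y : Type*} [TopologicalSpace X] [TopologicalSpace Y] {k n : ℕ}
    (g : NValuedMap X Y k) (f : NValuedMap X Y n) : Prop :=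
  ∀ x : X, (g x).values ⊆ (f x).values

/-- An `n`-valued map is irreducible when it admits no proper (`k`-valued, `0 < k < n`) submap. -/
def IsIrreducibleNV {X Y : Type*} [TopologicalSpace X] [TopologicalSpace Y] {n : ℕ}
    (f : NValuedMap X Y n) : Prop :=
  ¬ ∃ (k : ℕ) (g : NValuedMap X Y k), 0 < k ∧ k < n ∧ IsSubmap g f

/-- A partition of an `n`-valued map `f` into `l` multimaps:
a family of `kᵢ`-valued maps with `k₁ + ⋯ + k_l = n` whose values unite to those of `f`. -/
structure NVPartition {X Y : Type*} [TopologicalSpace X] [TopologicalSpace Y] {n : ℕ}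
    (f : NValuedMap X Y n) (l : ℕ) where
  card : Fin l → ℕ
  card_pos : ∀ i, 0 < card i
  maps : ∀ i, NValuedMap X Y (card i)
  sum_card : ∑ i, card i = n
  values_eq : ∀ x : X, (f x).values = ⋃ i, UnordConf.values ((maps i) x)

/-- A partition is into irreducibles when every member is irreducible. -/
def NVPartition.IsIrreduciblePartition {X Y : Type*} [TopologicalSpace X] [TopologicalSpace Y]
    {n : ℕ} {f : NValuedMap X Y n} {l : ℕ} (P : NVPartition f l) : Prop :=
  ∀ i, IsIrreducibleNV (P.maps i)

/-- A space is a (compact) finite polyhedron when it is homeomorphic to the underlying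
space of a finite simplicial complex in some Euclidean space. -/
def IsFinitePolyhedron (X : Type*) [TopologicalSpace X] : Prop :=
  ∃ (N : ℕ) (K : Geometry.SimplicialComplex ℝ (EuclideanSpace ℝ (Fin N))),
    K.faces.Finite ∧ Nonempty (X ≃ₜ K.space)
/-- Setoid identifying ordered configurations that differ by a permutation preserving
the block `{i : i < m}` (and hence its complement). -/
def mixedSetoid (n m : ℕ) (Y : Type*) [TopologicalSpace Y] : Setoid (OrdConf n Y) where
  r a b := ∃ ρ : Equiv.Perm (Fin n), (∀ i, ((ρ i : ℕ) < m ↔ (i : ℕ) < m)) ∧ a.1 ∘ ρ = b.1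
  iseqv := by
    constructor
    · intro a; exact ⟨Equiv.refl _, fun i => Iff.rfl, rfl⟩
    · rintro a b ⟨ρ, hρ, h⟩
      refine ⟨ρ.symm, fun i => ?_, funext fun i => ?_⟩
      · have := hρ (ρ.symm i)
        simpa using this.symm
      · have := congrFun h (ρ.symm i)
        simpa using this.symm
    · rintro a b c ⟨ρ₁, hρ₁, h1⟩ ⟨ρ₂, hρ₂, h2⟩
      refine ⟨ρ₂.trans ρ₁, fun i => ?_, funext fun i => ?_⟩
      · simpa [Equiv.trans_apply] using (hρ₁ (ρ₂ i)).trans (hρ₂ i)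
      · have h1' := congrFun h1 (ρ₂ i)
        have h2' := congrFun h2 i
        simp only [Function.comp_apply] at h1' h2' ⊢
        simp [Equiv.trans_apply, h1', h2']

/-- The mixed configuration space `D_{m, n-m}(Y)`. -/
def MixedConf (n m : ℕ) (Y : Type*) [TopologicalSpace Y] : Type _ :=
  Quotient (mixedSetoid n m Y)

instance (n m : ℕ) (Y : Type*) [TopologicalSpace Y] : TopologicalSpace (MixedConf n m Y) :=
  instTopologicalSpaceQuotient

/-- The covering `s : F_n(Y) → D_{m,n-m}(Y)`. -/
def sMap (n m : ℕ) (Y : Type*) [TopologicalSpace Y] : OrdConf n Y → MixedConf n m Y :=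
  Quotient.mk (mixedSetoid n m Y)

/-- The covering `t : D_{m,n-m}(Y) → D_n(Y)` forgetting the block structure. -/
def tMap (n m : ℕ) (Y : Type*) [TopologicalSpace Y] : MixedConf n m Y → UnordConf n Y :=
  Quotient.lift (Quotient.mk (confSetoid n Y)) (by
    rintro a b ⟨ρ, -, h⟩
    exact Quotient.sound ⟨ρ, h⟩)

/-- `t` as a continuous map. -/
def tCMap (n m : ℕ) (Y : Type*) [TopologicalSpace Y] : C(MixedConf n m Y, UnordConf n Y) :=
  ⟨tMap n m Y, Continuous.quotient_lift continuous_quotient_mk' _⟩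

/-- `f` has a proper partition: a partition into at least two multimaps. -/
def HasProperPartition {X Y : Type*} [TopologicalSpace X] [TopologicalSpace Y] {n : ℕ}
    (f : NValuedMap X Y n) : Prop :=
  ∃ l : ℕ, 2 ≤ l ∧ Nonempty (NVPartition f l)

open Topology

lemma exists_perm_forall_mem {ι α : Type*} [Finite ι] {b : ι → α} {U : ι → Set α}
    (hU : Pairwise (Disjoint on U)) (hb : ∀ i, ∃ j, b j ∈ U i) :
    ∃ σ : Equiv.Perm ι, ∀ i, b (σ i) ∈ U i := by
  choose τ hτ using hb
  have hτ_inj : Injective τ := fun i j hij =>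
    hU.eq (not_disjoint_iff.mpr ⟨b (τ i), hτ i, hij ▸ hτ j⟩)
  exact ⟨Equiv.ofBijective τ hτ_inj.bijective_of_finite, hτ⟩

lemma Equiv.Perm.image_setOf_eq {α : Type*} (ρ : Equiv.Perm α) {p : α → Prop}
    (h : ∀ x, p (ρ x) ↔ p x) : ρ '' {x | p x} = {x | p x} := by
  conv_lhs => rw [← Set.ext h, ← preimage_ofPred_eq]
  exact image_preimage_eq _ ρ.surjective

lemma Equiv.Perm.apply_mem_iff_of_mapsTo {α : Type*} [Finite α] (σ : Equiv.Perm α) {s : Set α}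
    (h : MapsTo σ s s) (x : α) : σ x ∈ s ↔ x ∈ s := by
  refine ⟨fun hx => ?_, fun hx => h hx⟩
  obtain ⟨y, hy, hxy⟩ := ((s.toFinite.injOn_iff_bijOn_of_mapsTo h).mp σ.injective.injOn).surjOn hx
  exact σ.injective hxy ▸ hy

lemma Fin.range_castAdd_eq_setOf {m l : ℕ} :
    range (Fin.castAdd l : Fin m → Fin (m + l)) = {i : Fin (m + l) | (i : ℕ) < m} :=
  Set.ext fun i => ⟨by rintro ⟨j, rfl⟩; exact j.2, fun h => ⟨⟨i, h⟩, rfl⟩⟩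

section Configurations

variable {Y : Type*} [TopologicalSpace Y]

lemma IsFinitePolyhedron.t2Space (h : IsFinitePolyhedron Y) : T2Space Y := by
  obtain ⟨N, K, -, ⟨e⟩⟩ := h
  exact e.isEmbedding.t2Space

namespace UnordConf

variable {n : ℕ}

lemma values_injective : Injective (values : UnordConf n Y → Set Y) := by
  rintro ⟨a⟩ ⟨b⟩ h
  replace h : range a.1 = range b.1 := h
  refine Quotient.sound ⟨(Equiv.ofInjective b.1 b.2).trans
    ((Equiv.setCongr h.symm).trans (Equiv.ofInjective a.1 a.2).symm), funext fun i => ?_⟩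
  exact Equiv.apply_ofInjective_symm a.2 _

lemma isOpen_setOf_values_inter_nonempty {U : Set Y} (hU : IsOpen U) :
    IsOpen {d : UnordConf n Y | (d.values ∩ U).Nonempty} := by
  have : Quotient.mk (confSetoid n Y) ⁻¹' {d : UnordConf n Y | (d.values ∩ U).Nonempty} =
      ⋃ i, (fun a : OrdConf n Y => a.1 i) ⁻¹' U := by
    ext a
    show (range a.1 ∩ U).Nonempty ↔ _
    simp [Set.Nonempty]
  exact isOpen_coinduced.mpr (this ▸ isOpen_iUnion fun i =>
    hU.preimage ((continuous_apply i).comp continuous_subtype_val))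

end UnordConf

namespace OrdConf

variable {n : ℕ}

lemma exists_disjoint_box [T2Space Y] {a : OrdConf n Y} {S : Set (OrdConf n Y)} (hS : S ∈ 𝓝 a) :
    ∃ U : Fin n → Set Y, (∀ i, IsOpen (U i) ∧ a.1 i ∈ U i) ∧ Pairwise (Disjoint on U) ∧
      ∀ b : OrdConf n Y, (∀ i, b.1 i ∈ U i) → b ∈ S := by
  obtain ⟨V, hVa, hV⟩ := Pairwise.exists_mem_filter_of_disjoint
    (l := fun i => 𝓝 (a.1 i)) fun i j hij => disjoint_nhds_nhds.mpr (a.2.ne hij)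
  obtain ⟨T, hTa, hTS⟩ := (mem_nhds_subtype _ a S).mp hS
  rw [nhds_pi, Filter.mem_pi] at hTa
  obtain ⟨I, -, t, hta, hIT⟩ := hTa
  refine ⟨fun i => interior (t i ∩ V i), fun i => ⟨isOpen_interior, ?_⟩,
    hV.mono fun i j h => h.mono (interior_subset.trans inter_subset_right)
      (interior_subset.trans inter_subset_right), fun b hb => hTS (hIT fun i _ => ?_)⟩
  · exact mem_interior_iff_mem_nhds.mpr (Filter.inter_mem (hta i) (hVa i))
  · exact (interior_subset (hb i)).1

def restrict {k : ℕ} (e : Fin k ↪ Fin n) (a : OrdConf n Y) : OrdConf k Y :=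
  ⟨a.1 ∘ e, a.2.comp e.injective⟩

lemma continuous_restrict {k : ℕ} (e : Fin k ↪ Fin n) :
    Continuous (restrict e : OrdConf n Y → OrdConf k Y) := by
  apply Continuous.subtype_mk
  exact continuous_pi fun i => (continuous_apply (e i)).comp continuous_subtype_val

end OrdConf

namespace MixedConf

variable {m l : ℕ}

def fst : MixedConf (m + l) m Y → UnordConf m Y :=
  Quotient.lift (fun a => Quotient.mk _ (a.restrict (Fin.castAddEmb l))) <| by
    rintro a b ⟨ρ, hρ, hab⟩
    refine UnordConf.values_injective ?_
    change range (a.1 ∘ Fin.castAdd l) = range (b.1 ∘ Fin.castAdd l)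
    rw [← hab, range_comp, range_comp, Fin.range_castAdd_eq_setOf, image_comp,
      ρ.image_setOf_eq (p := fun i => (i : ℕ) < m) hρ]

def snd : MixedConf (m + l) m Y → UnordConf l Y :=
  Quotient.lift (fun a => Quotient.mk _ (a.restrict (Fin.natAddEmb m))) <| by
    rintro a b ⟨ρ, hρ, hab⟩
    refine UnordConf.values_injective ?_
    have hρ' (i : Fin (m + l)) : m ≤ (ρ i : ℕ) ↔ m ≤ (i : ℕ) := by
      simpa only [not_lt] using (hρ i).not
    change range (a.1 ∘ Fin.natAdd m) = range (b.1 ∘ Fin.natAdd m)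
    rw [← hab, range_comp, range_comp, Fin.range_natAdd, image_comp,
      ρ.image_setOf_eq (p := fun i => m ≤ (i : ℕ)) hρ']

lemma continuous_fst : Continuous (fst : MixedConf (m + l) m Y → UnordConf m Y) :=
  continuous_quot_lift _ <| continuous_quot_mk.comp <| OrdConf.continuous_restrict _

lemma continuous_snd : Continuous (snd : MixedConf (m + l) m Y → UnordConf l Y) :=
  continuous_quot_lift _ <| continuous_quot_mk.comp <| OrdConf.continuous_restrict _

lemma values_tMap (z : MixedConf (m + l) m Y) :
    (tMap (m + l) m Y z).values = (fst z).values ∪ (snd z).values := by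
  induction z using Quotient.ind with
  | _ a =>
  change range a.1 = range (a.1 ∘ Fin.castAdd l) ∪ range (a.1 ∘ Fin.natAdd m)
  rw [range_comp, range_comp, ← image_union, Fin.range_castAdd_eq_setOf, Fin.range_natAdd,
    ← ofPred_or, ← image_univ]
  simp only [lt_or_ge, ofPred_true]

lemma exists_fst_eq_tMap_eq {c : UnordConf m Y} {d : UnordConf (m + l) Y}
    (h : c.values ⊆ d.values) : ∃ z, fst z = c ∧ tMap (m + l) m Y z = d := by
  obtain ⟨a, rfl⟩ := Quotient.exists_rep c
  obtain ⟨b, rfl⟩ := Quotient.exists_rep d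
  choose g hg using fun j => h (mem_range_self (f := a.1) j)
  have hg_inj : Injective g := fun i j hij => a.2 (by rw [← hg i, ← hg j, hij])
  obtain ⟨σ, hσ⟩ := Equiv.Perm.exists_extending_pair _ g (Fin.castAdd_injective m l) hg_inj
  refine ⟨Quotient.mk _ ⟨b.1 ∘ σ, b.2.comp σ.injective⟩, ?_,
    (Quotient.sound (s := confSetoid (m + l) Y) ⟨σ, rfl⟩).symm⟩
  exact congrArg (Quotient.mk _) (Subtype.ext (funext fun j => by simp [OrdConf.restrict, hσ, hg]))

lemma exists_mk_eq_forall_mem {U : Fin (m + l) → Set Y} (hU : Pairwise (Disjoint on U))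
    (b : OrdConf (m + l) Y) (hfst : ∀ i : Fin m, ∃ j : Fin m, b.1 (j.castAdd l) ∈ U (i.castAdd l))
    (hb : ∀ i, ∃ j, b.1 j ∈ U i) :
    ∃ b' : OrdConf (m + l) Y, Quotient.mk (mixedSetoid (m + l) m Y) b' = Quotient.mk _ b ∧
      ∀ i, b'.1 i ∈ U i := by
  obtain ⟨σ, hσ⟩ := exists_perm_forall_mem hU hb
  have hσ_mapsTo : MapsTo σ {i | (i : ℕ) < m} {i | (i : ℕ) < m} := by
    intro i (hi : (i : ℕ) < m)
    obtain ⟨j, hj⟩ := hfst ⟨i, hi⟩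
    have : σ.symm (j.castAdd l) = i :=
      hU.eq (not_disjoint_iff.mpr ⟨_, by simpa using hσ (σ.symm (j.castAdd l)), hj⟩)
    rw [← this, Equiv.apply_symm_apply]
    exact j.2
  refine ⟨⟨b.1 ∘ σ, b.2.comp σ.injective⟩, ?_, hσ⟩
  exact (Quotient.sound (s := mixedSetoid (m + l) m Y)
    ⟨σ, σ.apply_mem_iff_of_mapsTo hσ_mapsTo, rfl⟩).symm

lemma isInducing_fst_tMap [T2Space Y] :
    IsInducing fun z : MixedConf (m + l) m Y => (fst z, tMap (m + l) m Y z) := by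
  refine isInducing_iff_nhds.mpr fun z => le_antisymm
    ((continuous_fst.prodMk (tCMap (m + l) m Y).continuous).tendsto z).le_comap fun W hW => ?_
  obtain ⟨a, rfl⟩ := Quotient.exists_rep z
  obtain ⟨U, hUa, hU, hUW⟩ := OrdConf.exists_disjoint_box (continuous_quot_mk.continuousAt hW)
  let O₁ : Set (UnordConf m Y) := ⋂ i : Fin m, {c | (c.values ∩ U (i.castAdd l)).Nonempty}
  let O₂ : Set (UnordConf (m + l) Y) := ⋂ i, {d | (d.values ∩ U i).Nonempty}
  have hO : IsOpen (O₁ ×ˢ O₂) :=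
    (isOpen_iInter_of_finite fun _ => UnordConf.isOpen_setOf_values_inter_nonempty (hUa _).1).prod
      (isOpen_iInter_of_finite fun i => UnordConf.isOpen_setOf_values_inter_nonempty (hUa i).1)
  have haO : (fst (Quotient.mk _ a), tMap (m + l) m Y (Quotient.mk _ a)) ∈ O₁ ×ˢ O₂ :=
    ⟨mem_iInter.mpr fun i => ⟨_, ⟨i, rfl⟩, (hUa _).2⟩,
      mem_iInter.mpr fun i => ⟨_, ⟨i, rfl⟩, (hUa i).2⟩⟩
  refine Filter.mem_comap.mpr ⟨O₁ ×ˢ O₂, hO.mem_nhds haO, ?_⟩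
  rintro ⟨b⟩ ⟨hfst, hb⟩
  obtain ⟨b', hb'b, hb'U⟩ := exists_mk_eq_forall_mem hU b
    (fun i => by obtain ⟨_, ⟨j, rfl⟩, hj⟩ := mem_iInter.mp hfst i; exact ⟨j, hj⟩)
    (fun i => by obtain ⟨_, ⟨j, rfl⟩, hj⟩ := mem_iInter.mp hb i; exact ⟨j, hj⟩)
  show Quotient.mk _ b ∈ W
  exact hb'b ▸ hUW b' hb'U

lemma exists_lift_of_isSubmap [T2Space Y] {X : Type*} [TopologicalSpace X]
    {g : NValuedMap X Y m} {f : NValuedMap X Y (m + l)} (h : IsSubmap g f) :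
    ∃ fhat : C(X, MixedConf (m + l) m Y), ∀ x, tMap (m + l) m Y (fhat x) = f x := by
  choose F hF using fun x => exists_fst_eq_tMap_eq (h x)
  have hF_cont : Continuous F := by
    refine isInducing_fst_tMap.continuous_iff.mpr ?_
    simpa only [comp_def, hF] using g.continuous.prodMk f.continuous
  exact ⟨⟨F, hF_cont⟩, fun x => (hF x).2⟩

end MixedConf

variable {X : Type*} [TopologicalSpace X] {n : ℕ} {f : NValuedMap X Y n}

lemma HasProperPartition.exists_isSubmap (hf : HasProperPartition f) :
    ∃ m, 0 < m ∧ m < n ∧ ∃ g : NValuedMap X Y m, IsSubmap g f := by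
  obtain ⟨k, hk, ⟨P⟩⟩ := hf
  let i : Fin k := ⟨0, by omega⟩
  let j : Fin k := ⟨1, by omega⟩
  have hji : j ≠ i := by simp [i, j, Fin.ext_iff]
  refine ⟨P.card i, P.card_pos i, ?_, P.maps i, fun x => ?_⟩
  · exact (Finset.single_lt_sum hji (Finset.mem_univ _) (Finset.mem_univ _) (P.card_pos j)
      fun _ _ _ => Nat.zero_le _).trans_eq P.sum_card
  · rw [P.values_eq x]
    exact subset_iUnion (fun i => (P.maps i x).values) i

lemma hasProperPartition_of_values_eq_union {m l : ℕ} (g₁ : NValuedMap X Y m)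
    (g₂ : NValuedMap X Y l) (hm : 0 < m) (hl : 0 < l) (hn : m + l = n)
    (h : ∀ x, (f x).values = (g₁ x).values ∪ (g₂ x).values) : HasProperPartition f :=
  ⟨2, le_rfl, ⟨{
    card := ![m, l]
    card_pos := Fin.forall_fin_two.mpr ⟨hm, hl⟩
    maps := Fin.cases g₁ (Fin.cases g₂ finZeroElim)
    sum_card := by simpa using hn
    values_eq := fun x => by
      ext y
      simp only [h x, mem_union, mem_iUnion, Fin.exists_fin_two]
      rfl }⟩⟩

end Configurations

theorem statement_3_general {X Y : Type*} [TopologicalSpace X] [TopologicalSpace Y]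
    (hY : IsFinitePolyhedron Y)
    {n : ℕ} (f : NValuedMap X Y n) :
    HasProperPartition f ↔
      ∃ m l : ℕ, 0 < m ∧ 0 < l ∧ m + l = n ∧
        ∃ fhat : C(X, MixedConf n m Y), ∀ x : X, tMap n m Y (fhat x) = f x := by
  have := hY.t2Space
  constructor
  · intro hf
    obtain ⟨m, hm, hmn, g, hg⟩ := hf.exists_isSubmap
    obtain ⟨l, rfl⟩ := Nat.exists_eq_add_of_le hmn.le
    exact ⟨m, l, hm, by omega, rfl, MixedConf.exists_lift_of_isSubmap hg⟩
  · rintro ⟨m, l, hm, hl, rfl, fhat, hfhat⟩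
    refine hasProperPartition_of_values_eq_union
      ⟨_, MixedConf.continuous_fst.comp fhat.continuous⟩
      ⟨_, MixedConf.continuous_snd.comp fhat.continuous⟩ hm hl rfl fun x => ?_
    rw [← hfhat x, MixedConf.values_tMap]
    rfl

theorem statement_3 {X Y : Type*} [TopologicalSpace X] [TopologicalSpace Y]
    [ConnectedSpace X] [ConnectedSpace Y]
    (hX : IsFinitePolyhedron X) (hY : IsFinitePolyhedron Y)
    {n : ℕ} (f : NValuedMap X Y n) :
    HasProperPartition f ↔
      ∃ m l : ℕ, 0 < m ∧ 0 < l ∧ m + l = n ∧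
        ∃ fhat : C(X, MixedConf n m Y), ∀ x : X, tMap n m Y (fhat x) = f x :=
  statement_3_general hY f
end

section
/- Let A be a q×q integer matrix all of whose rows are congruent mod n to a fixed vector (l_1,...,l_q). Then the linear n-valued map f_{n,A}: T^q → D_n(T^q) has a proper partition if and only if there exists an integer m > 1 which is a common factor of n and of every l_j. -/
open Function Set

/-- The `q`-torus `ℝ^q/ℤ^q`. -/
abbrev Torus (q : ℕ) := Fin q → AddCircle (1 : ℝ)

/-- The universal covering projection `ℝ^q → T^q`, `t ↦ t mod 1`. -/
noncomputable def torusProj {q : ℕ} (t : Fin q → ℝ) : Torus q := fun i => (t i : AddCircle (1 : ℝ))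

/-- The affine lift `f^k_{n,A}(t) = (1/n)(At + k·c)`, where `c = (1,…,1)`. -/
noncomputable def linLift {q : ℕ} (n : ℕ) (A : Matrix (Fin q) (Fin q) ℤ) (k : ℤ) (t : Fin q → ℝ) :
    Fin q → ℝ :=
  fun i => (1 / (n : ℝ)) * ((A.map (Int.cast : ℤ → ℝ)).mulVec t i + (k : ℝ))

/-- `f` is (a representative of) the linear `n`-valued torus map `f_{n,A}` induced by `A`:
its value at `p^q(t)` is `{p^q(f^1_{n,A}(t)), …, p^q(f^n_{n,A}(t))}`. -/
def IsLinearNV {q : ℕ} (n : ℕ) (A : Matrix (Fin q) (Fin q) ℤ)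
    (f : NValuedMap (Torus q) (Torus q) n) : Prop :=
  ∀ t : Fin q → ℝ,
    UnordConf.values (f (torusProj t)) =
      Set.range fun k : Fin n => torusProj (linLift n A ((k : ℕ) + 1) t)

/-!
Write `p_t(k) ∈ T^q` for the image of `f^k_{n,A}(t)`. It depends only on `k mod n`, and
translating `t` by an integer vector `v` shifts `k` by `l ⬝ v`, because every row of `A` is
congruent to `l` mod `n`.

The members of a partition of an `n`-valued map have pairwise disjoint values (the cardinalities
add up to `n`), and each membership relation is closed, so a continuous family of points of `f`
over a connected parameter space stays in a single member. Along the segment from `0` to the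
basis vector `e_j` this moves `p_0(k)` to `p_{e_j}(k) = p_0(k + l_j)` over the same base point.
Hence the colouring of `ℤ` recording which member contains `p_0(k)` has `n` and every `l_j` as
periods; if the subgroup of its periods contained `1`, one member would contain all `n` points.

Conversely, if `m > 1` divides `n` and every `l_j`, the shifts `l ⬝ v` preserve the residue
classes mod `m`, so each class of indices gives a well-defined `n/m`-valued map on the torus.
-/

open Topology

theorem OrdConf.continuous_val {n : ℕ} {Y : Type*} [TopologicalSpace Y] :
    Continuous fun a : OrdConf n Y => a.1 :=
  continuous_subtype_val

namespace UnordConf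

variable {n : ℕ} {Y : Type*} [TopologicalSpace Y]

def mk (a : OrdConf n Y) : UnordConf n Y :=
  Quotient.mk (confSetoid n Y) a

theorem mk_surjective : Surjective (mk : OrdConf n Y → UnordConf n Y) :=
  Quotient.mk_surjective

theorem mk_eq_mk_iff {a b : OrdConf n Y} : mk a = mk b ↔ ∃ σ : Equiv.Perm (Fin n), a.1 ∘ σ = b.1 :=
  Quotient.eq

theorem isQuotientMap_mk : IsQuotientMap (mk : OrdConf n Y → UnordConf n Y) :=
  isQuotientMap_quotient_mk'

theorem values_mk (a : OrdConf n Y) : (mk a).values = range a.1 :=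
  rfl

theorem natCard_values (c : UnordConf n Y) : Nat.card c.values = n := by
  obtain ⟨a, rfl⟩ := mk_surjective c
  rw [values_mk, Nat.card_range_of_injective a.2, Nat.card_fin]

instance (c : UnordConf n Y) : Finite c.values := by
  obtain ⟨a, rfl⟩ := mk_surjective c
  exact Set.finite_range _

theorem eq_of_values_eq {c c' : UnordConf n Y} (h : c.values = c'.values) : c = c' := by
  obtain ⟨a, rfl⟩ := mk_surjective c
  obtain ⟨b, rfl⟩ := mk_surjective c'
  refine mk_eq_mk_iff.2 ⟨(Equiv.ofInjective b.1 b.2).trans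
    ((Equiv.setCongr h.symm).trans (Equiv.ofInjective a.1 a.2).symm), funext fun i => ?_⟩
  exact Equiv.apply_ofInjective_symm a.2 _

theorem isOpenQuotientMap_mk : IsOpenQuotientMap (mk : OrdConf n Y → UnordConf n Y) := by
  refine ⟨mk_surjective, isQuotientMap_mk.continuous, fun U hU => ?_⟩
  rw [← isQuotientMap_mk.isOpen_preimage]
  let permute (σ : Equiv.Perm (Fin n)) (a : OrdConf n Y) : OrdConf n Y :=
    ⟨a.1 ∘ σ, a.2.comp σ.injective⟩
  have hsat : mk ⁻¹' (mk '' U) = ⋃ σ, permute σ ⁻¹' U := by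
    ext b
    simp only [mem_preimage, mem_image, mem_iUnion, mk_eq_mk_iff]
    constructor
    · rintro ⟨a, haU, σ, hσ⟩
      have : permute σ.symm b = a := Subtype.ext <| funext fun i => by
        simp [permute, ← hσ]
      exact ⟨σ.symm, this ▸ haU⟩
    · rintro ⟨σ, hσ⟩
      exact ⟨_, hσ, σ.symm, by ext; simp [permute]⟩
  exact hsat ▸ isOpen_iUnion fun σ => hU.preimage
    ((continuous_pi fun i => (continuous_apply (σ i)).comp OrdConf.continuous_val).subtype_mk _)

theorem isClosed_mem_values [T2Space Y] : IsClosed {p : UnordConf n Y × Y | p.2 ∈ p.1.values} := by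
  rw [← (isOpenQuotientMap_mk.prodMap IsOpenQuotientMap.id).isQuotientMap.isClosed_preimage]
  have : Prod.map mk id ⁻¹' {p : UnordConf n Y × Y | p.2 ∈ p.1.values} =
      ⋃ i, {p : OrdConf n Y × Y | p.1.1 i = p.2} := by
    ext ⟨a, y⟩
    simp [values_mk]
  rw [this]
  exact isClosed_iUnion_of_finite fun i => isClosed_eq
    ((continuous_apply i).comp (OrdConf.continuous_val.comp continuous_fst)) continuous_snd

end UnordConf

theorem eq_univ_of_isClosed_of_pairwise_disjoint {S ι : Type*} [TopologicalSpace S]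
    [PreconnectedSpace S] [Finite ι] {C : ι → Set S} (hC : ∀ i, IsClosed (C i))
    (hdisj : Pairwise (Disjoint on C)) (hcover : ⋃ i, C i = univ) {i : ι} (hne : (C i).Nonempty) :
    C i = univ := by
  have hcompl : (C i)ᶜ = ⋃ j ∈ ({i}ᶜ : Set ι), C j := by
    ext s
    have hs : ∃ j, s ∈ C j := mem_iUnion.1 (hcover ▸ mem_univ s)
    simp only [mem_compl_iff, mem_iUnion]
    constructor
    · intro hsi
      obtain ⟨j, hj⟩ := hs
      exact ⟨j, fun hji => hsi (hji ▸ hj), hj⟩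
    · rintro ⟨j, hji, hj⟩ hsi
      exact (hdisj hji).notMem_of_mem_left hj hsi
  refine IsClopen.eq_univ ⟨hC i, ?_⟩ hne
  rw [← isClosed_compl_iff, hcompl]
  exact (Set.toFinite _).isClosed_biUnion fun j _ => hC j

namespace NVPartition

variable {X Y : Type*} [TopologicalSpace X] [TopologicalSpace Y] {n l : ℕ}
  {f : NValuedMap X Y n} (P : NVPartition f l)

theorem exists_mem_values {x : X} {y : Y} (hy : y ∈ (f x).values) :
    ∃ i, y ∈ (P.maps i x).values :=
  mem_iUnion.1 (P.values_eq x ▸ hy)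

theorem bijective_sigma_values (x : X) :
    Bijective fun p : Σ i, (P.maps i x).values =>
      (⟨p.2, P.values_eq x ▸ mem_iUnion_of_mem p.1 p.2.2⟩ : (f x).values) := by
  refine Surjective.bijective_of_nat_card_le (fun y => ?_) ?_
  · obtain ⟨i, hi⟩ := P.exists_mem_values y.2
    exact ⟨⟨i, y, hi⟩, rfl⟩
  · rw [Nat.card_sigma]
    simp only [UnordConf.natCard_values, P.sum_card, le_refl]

theorem eq_of_mem_values {x : X} {y : Y} {i j : Fin l} (hi : y ∈ (P.maps i x).values)
    (hj : y ∈ (P.maps j x).values) : i = j :=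
  congrArg Sigma.fst (@(P.bijective_sigma_values x).1 ⟨i, y, hi⟩ ⟨j, y, hj⟩ rfl)

theorem not_values_subset (hl : 2 ≤ l) (x : X) (i : Fin l) :
    ¬ (f x).values ⊆ (P.maps i x).values := by
  intro hsub
  have : Nontrivial (Fin l) := Fin.nontrivial_iff_two_le.2 hl
  obtain ⟨j, hji⟩ := exists_ne i
  have hcard : P.card i + P.card j ≤ n :=
    calc P.card i + P.card j = ∑ k ∈ {i, j}, P.card k := (Finset.sum_pair hji.symm).symm
      _ ≤ ∑ k, P.card k := Finset.sum_le_sum_of_subset (Finset.subset_univ _)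
      _ = n := P.sum_card
  have := Nat.card_mono (toFinite _) hsub
  simp only [UnordConf.natCard_values] at this
  have := P.card_pos j
  omega

theorem forall_mem_values_of_preconnected [T2Space Y] {S : Type*} [TopologicalSpace S]
    [PreconnectedSpace S] {α : S → X} {γ : S → Y} (hα : Continuous α) (hγ : Continuous γ)
    (hmem : ∀ s, γ s ∈ (f (α s)).values) {i : Fin l} {s₀ : S}
    (h₀ : γ s₀ ∈ (P.maps i (α s₀)).values) (s : S) : γ s ∈ (P.maps i (α s)).values := by
  let C j : Set S := {s | γ s ∈ (P.maps j (α s)).values}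
  have hC : C i = univ := by
    refine eq_univ_of_isClosed_of_pairwise_disjoint (fun j => ?_) (fun j k hjk => ?_) ?_ ⟨s₀, h₀⟩
    · exact UnordConf.isClosed_mem_values.preimage (((P.maps j).continuous.comp hα).prodMk hγ)
    · exact Set.disjoint_left.2 fun s hj hk => hjk (P.eq_of_mem_values hj hk)
    · exact eq_univ_of_forall fun s => mem_iUnion.2 (P.exists_mem_values (hmem s))
  exact (hC.symm ▸ mem_univ s : s ∈ C i)

end NVPartition

def Function.periodsAddSubgroup {G α : Type*} [AddGroup G] (c : G → α) : AddSubgroup G where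
  carrier := {g | Periodic c g}
  zero_mem' := periodic_with_period_zero c
  add_mem' := Periodic.add_period
  neg_mem' := Periodic.neg

theorem Int.exists_one_lt_forall_dvd_of_one_notMem {H : AddSubgroup ℤ} (hH : H ≠ ⊥)
    (h1 : (1 : ℤ) ∉ H) : ∃ m : ℤ, 1 < m ∧ ∀ x ∈ H, m ∣ x := by
  obtain ⟨d, rfl⟩ := Int.subgroup_cyclic H
  rw [← AddSubgroup.zmultiples_eq_closure] at hH h1 ⊢
  simp only [Int.mem_zmultiples_iff] at h1 ⊢
  have hd0 : d ≠ 0 := by rintro rfl; simp at hH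
  have hd1 : d.natAbs ≠ 1 := fun h => h1 (Int.natAbs_dvd.1 (by simp [h]))
  exact ⟨d.natAbs, by omega, fun x hx => Int.natAbs_dvd.2 hx⟩

theorem Function.Periodic.range_fin_mul_add {Y : Type*} {p : ℤ → Y} {m K : ℕ} (hK : K ≠ 0)
    (hp : Periodic p (m * K)) (r : ℤ) :
    range (fun a : Fin K => p (a * m + r)) = p '' {k | k ≡ r [ZMOD m]} := by
  ext y
  constructor
  · rintro ⟨a, rfl⟩
    exact ⟨a * m + r, by simp [Int.ModEq], rfl⟩
  · rintro ⟨k, hk, rfl⟩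
    obtain ⟨b, hb⟩ := hk.symm.dvd
    have hK' : (0 : ℤ) < K := by omega
    have h0 := Int.emod_nonneg b hK'.ne'
    have hlt := Int.emod_lt_of_pos b hK'
    refine ⟨⟨(b % K).toNat, by omega⟩, ?_⟩
    have hk : k = (b % K) * m + r + (b / K) * (m * K) := by
      linear_combination hb - m * Int.emod_add_mul_ediv b K
    simp only [Int.toNat_of_nonneg h0, hk]
    exact (hp.int_mul (b / K) _).symm

theorem Int.iUnion_modEq_fin_add_one {m : ℕ} (hm : m ≠ 0) :
    ⋃ r : Fin m, {k : ℤ | k ≡ r + 1 [ZMOD m]} = univ := by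
  refine eq_univ_of_forall fun k => mem_iUnion.2 ?_
  have h0 : 0 ≤ (k - 1) % m := Int.emod_nonneg _ (by omega)
  have hlt : (k - 1) % m < m := Int.emod_lt_of_pos _ (by omega)
  refine ⟨⟨((k - 1) % m).toNat, by omega⟩, ?_⟩
  show k ≡ (((k - 1) % m).toNat : ℤ) + 1 [ZMOD m]
  rw [Int.toNat_of_nonneg h0]
  simpa using ((Int.mod_modEq (k - 1) m).add_right 1).symm

theorem Int.image_add_setOf_modEq {m d : ℤ} (hd : d ≡ 0 [ZMOD m]) (r : ℤ) :
    (· + d) '' {k | k ≡ r [ZMOD m]} = {k | k ≡ r [ZMOD m]} := by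
  ext k
  constructor
  · rintro ⟨k, hk, rfl⟩
    simpa using hk.add hd
  · intro hk
    exact ⟨k - d, by simpa using hk.sub hd, sub_add_cancel k d⟩

section LinearTorus

open Matrix

variable {q n : ℕ} {A : Matrix (Fin q) (Fin q) ℤ} {l : Fin q → ℤ}

theorem isQuotientMap_torusProj : IsQuotientMap (torusProj (q := q)) :=
  (IsOpenQuotientMap.piMap fun _ => QuotientAddGroup.isOpenQuotientMap_mk).isQuotientMap

theorem exists_continuousMap_comp_torusProj {Z : Type*} [TopologicalSpace Z]
    (u : C(Fin q → ℝ, Z)) (hu : FactorsThrough u torusProj) :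
    ∃ g : C(Torus q, Z), ∀ t, g (torusProj t) = u t := by
  let π : C(Fin q → ℝ, Torus q) := ⟨torusProj, isQuotientMap_torusProj.continuous⟩
  have hπ : IsQuotientMap π := isQuotientMap_torusProj
  exact ⟨hπ.lift u hu, ContinuousMap.congr_fun (hπ.lift_comp u hu)⟩

theorem torusProj_eq_torusProj_iff {t t' : Fin q → ℝ} :
    torusProj t = torusProj t' ↔ ∃ v : Fin q → ℤ, t' = t + fun i => (v i : ℝ) := by
  simp only [torusProj, funext_iff, QuotientAddGroup.eq, AddSubgroup.mem_zmultiples_iff,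
    zsmul_eq_mul, mul_one, Pi.add_apply]
  constructor
  · intro h
    choose v hv using h
    exact ⟨v, fun i => by linarith [hv i]⟩
  · rintro ⟨v, hv⟩ i
    exact ⟨v i, by rw [hv i]; ring⟩

noncomputable def linPoint (n : ℕ) (A : Matrix (Fin q) (Fin q) ℤ) (t : Fin q → ℝ) (k : ℤ) :
    Torus q :=
  torusProj (linLift n A k t)

theorem continuous_linPoint (k : ℤ) : Continuous fun t => linPoint n A t k := by
  refine isQuotientMap_torusProj.continuous.comp (continuous_pi fun i => ?_)
  simp only [linLift, Matrix.mulVec, dotProduct]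
  fun_prop

theorem linPoint_periodic (hn : n ≠ 0) (t : Fin q → ℝ) : Periodic (linPoint n A t) n := by
  intro k
  refine torusProj_eq_torusProj_iff.2 ⟨fun _ => -1, funext fun i => ?_⟩
  simp only [linLift, Pi.add_apply]
  push_cast
  field_simp
  ring

theorem linPoint_add_intCast (hn : n ≠ 0) (hrow : ∀ i j, A i j ≡ l j [ZMOD n])
    (t : Fin q → ℝ) (v : Fin q → ℤ) (k : ℤ) :
    linPoint n A (t + fun i => (v i : ℝ)) k = linPoint n A t (k + l ⬝ᵥ v) := by
  have hdvd : ∀ i, (n : ℤ) ∣ (A *ᵥ v) i - l ⬝ᵥ v := fun i => by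
    simp only [Matrix.mulVec, dotProduct, ← Finset.sum_sub_distrib, ← sub_mul]
    exact Finset.dvd_sum fun j _ => (hrow i j).symm.dvd.mul_right _
  choose w hw using hdvd
  refine torusProj_eq_torusProj_iff.2 ⟨fun i => -w i, funext fun i => ?_⟩
  have hwi : ∑ j, (A i j : ℝ) * v j - ∑ j, (l j : ℝ) * v j = n * w i := by exact_mod_cast hw i
  simp only [linLift, Matrix.mulVec, dotProduct, Matrix.map_apply, Pi.add_apply, mul_add,
    Finset.sum_add_distrib]
  push_cast
  field_simp
  linarith

namespace IsLinearNV

variable {f : NValuedMap (Torus q) (Torus q) n}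

theorem values_eq_range (hn : n ≠ 0) (hf : IsLinearNV n A f) (t : Fin q → ℝ) :
    (f (torusProj t)).values = range (linPoint n A t) := by
  have h := Periodic.range_fin_mul_add (m := 1) hn
    (by simpa using linPoint_periodic (A := A) hn t) 1
  simp only [Nat.cast_one, mul_one, Int.modEq_one, ofPred_true, image_univ] at h
  rw [hf t, ← h]
  rfl

theorem injective_linPoint (hf : IsLinearNV n A f) (t : Fin q → ℝ) :
    Injective fun k : Fin n => linPoint n A t (k + 1) := by
  have hcard : Nat.card (range fun k : Fin n => linPoint n A t (k + 1)) = Nat.card (Fin n) := by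
    have hrange : (range fun k : Fin n => linPoint n A t (k + 1)) = (f (torusProj t)).values :=
      (hf t).symm
    rw [hrange, UnordConf.natCard_values, Nat.card_fin]
  have := ((Nat.bijective_iff_surjective_and_card (rangeFactorization _)).2
    ⟨rangeFactorization_surjective, hcard.symm⟩).1
  exact fun a b h => this (Subtype.ext h)

theorem linPoint_add_mem_of_mem (hn : n ≠ 0) (hrow : ∀ i j, A i j ≡ l j [ZMOD n])
    (hf : IsLinearNV n A f) {L : ℕ} (P : NVPartition f L) (j : Fin q) {i : Fin L} {k : ℤ}
    (h : linPoint n A 0 k ∈ (P.maps i (torusProj 0)).values) :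
    linPoint n A 0 (k + l j) ∈ (P.maps i (torusProj 0)).values := by
  set e : Fin q → ℤ := Pi.single j 1
  set v : Fin q → ℝ := fun i => (e i : ℝ)
  have hpath := P.forall_mem_values_of_preconnected (α := fun s : ℝ => torusProj (s • v))
    (γ := fun s => linPoint n A (s • v) k)
    (isQuotientMap_torusProj.continuous.comp (continuous_id.smul continuous_const))
    ((continuous_linPoint k).comp (continuous_id.smul continuous_const))
    (fun s => hf.values_eq_range hn (s • v) ▸ mem_range_self k) (s₀ := 0) (by simpa using h) 1
  have hloop : torusProj (0 + v) = torusProj 0 := (torusProj_eq_torusProj_iff.2 ⟨e, rfl⟩).symm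
  simp only [one_smul] at hpath
  rwa [← zero_add v, linPoint_add_intCast hn hrow, hloop, dotProduct_single, mul_one] at hpath

theorem exists_dvd_of_hasProperPartition (hn : n ≠ 0) (hrow : ∀ i j, A i j ≡ l j [ZMOD n])
    (hf : IsLinearNV n A f) (hP : HasProperPartition f) :
    ∃ m : ℤ, 1 < m ∧ m ∣ n ∧ ∀ j, m ∣ l j := by
  obtain ⟨L, hL, ⟨P⟩⟩ := hP
  have hcol k : ∃ i, linPoint n A 0 k ∈ (P.maps i (torusProj 0)).values :=
    P.exists_mem_values (hf.values_eq_range hn 0 ▸ mem_range_self k)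
  choose c hc using hcol
  have hperiod {g : ℤ} (hg : ∀ k, linPoint n A 0 (k + g) ∈ (P.maps (c k) (torusProj 0)).values) :
      g ∈ periodsAddSubgroup c := fun k => (P.eq_of_mem_values (hc (k + g)) (hg k))
  have hn_mem : (n : ℤ) ∈ periodsAddSubgroup c :=
    hperiod fun k => (linPoint_periodic hn 0 k).symm ▸ hc k
  have hl_mem j : l j ∈ periodsAddSubgroup c :=
    hperiod fun k => hf.linPoint_add_mem_of_mem hn hrow P j (hc k)
  have h1 : (1 : ℤ) ∉ periodsAddSubgroup c := by
    intro h1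
    apply P.not_values_subset hL (torusProj 0) (c 0)
    rw [hf.values_eq_range hn 0]
    rintro _ ⟨k, rfl⟩
    have : c k = c 0 := by simpa using (h1 : Periodic c 1).int_mul_eq k
    exact this ▸ hc k
  have hbot : periodsAddSubgroup c ≠ ⊥ := fun h =>
    hn (by exact_mod_cast (AddSubgroup.mem_bot.1 (h ▸ hn_mem)))
  obtain ⟨m, hm, hdvd⟩ := Int.exists_one_lt_forall_dvd_of_one_notMem hbot h1
  exact ⟨m, hm, hdvd _ hn_mem, fun j => hdvd _ (hl_mem j)⟩

theorem exists_values_eq_image_setOf_modEq {m K : ℕ} (hn : n = m * K) (hK : K ≠ 0)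
    (hrow : ∀ i j, A i j ≡ l j [ZMOD n]) (hf : IsLinearNV n A f) (hl : ∀ j, (m : ℤ) ∣ l j)
    (r : Fin m) : ∃ g : NValuedMap (Torus q) (Torus q) K,
      ∀ t, (g (torusProj t)).values = linPoint n A t '' {k | k ≡ r + 1 [ZMOD m]} := by
  have hn0 : n ≠ 0 := hn ▸ mul_ne_zero r.pos.ne' hK
  have hinj t : Injective fun a : Fin K => linPoint n A t (a * m + (r + 1)) := by
    intro a b hab
    have hlt (c : Fin K) : (c : ℕ) * m + r < n := by
      subst hn; nlinarith [c.2, r.2]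
    have := hf.injective_linPoint t (a₁ := ⟨a * m + r, hlt a⟩) (a₂ := ⟨b * m + r, hlt b⟩)
      (by simpa [add_assoc] using hab)
    exact Fin.ext (Nat.eq_of_mul_eq_mul_right r.pos (by simpa using this))
  let u : C(Fin q → ℝ, UnordConf K (Torus q)) :=
    ⟨fun t => UnordConf.mk ⟨_, hinj t⟩, UnordConf.isQuotientMap_mk.continuous.comp
      ((continuous_pi fun a => continuous_linPoint _).subtype_mk _)⟩
  have hu t : (u t).values = linPoint n A t '' {k | k ≡ r + 1 [ZMOD m]} :=
    (UnordConf.values_mk _).trans <| Periodic.range_fin_mul_add (p := linPoint n A t) hK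
      (by rw [← Nat.cast_mul, ← hn]; exact linPoint_periodic hn0 t) _
  have hfactor : FactorsThrough u torusProj := fun t t' h => by
    obtain ⟨v, rfl⟩ := torusProj_eq_torusProj_iff.1 h
    have hd : l ⬝ᵥ v ≡ 0 [ZMOD m] :=
      Int.modEq_zero_iff_dvd.2 (Finset.dvd_sum fun j _ => (hl j).mul_right _)
    refine UnordConf.eq_of_values_eq ?_
    simp only [hu, linPoint_add_intCast hn0 hrow]
    rw [← image_image (linPoint n A t) (· + l ⬝ᵥ v), Int.image_add_setOf_modEq hd]
  obtain ⟨g, hg⟩ := exists_continuousMap_comp_torusProj u hfactor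
  exact ⟨g, fun t => hg t ▸ hu t⟩

theorem hasProperPartition_of_dvd {m K : ℕ} (hm : 1 < m) (hn : n = m * K) (hK : K ≠ 0)
    (hrow : ∀ i j, A i j ≡ l j [ZMOD n]) (hf : IsLinearNV n A f) (hl : ∀ j, (m : ℤ) ∣ l j) :
    HasProperPartition f := by
  choose g hg using hf.exists_values_eq_image_setOf_modEq hn hK hrow hl
  refine ⟨m, hm, ⟨
    { card := fun _ => K
      card_pos := fun _ => Nat.pos_of_ne_zero hK
      maps := g
      sum_card := by simp [hn]
      values_eq := fun x => ?_ }⟩⟩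
  obtain ⟨t, rfl⟩ := isQuotientMap_torusProj.surjective x
  have hn0 : n ≠ 0 := hn ▸ mul_ne_zero (by omega) hK
  simp only [hg, hf.values_eq_range hn0 t, ← image_iUnion,
    Int.iUnion_modEq_fin_add_one (m := m) (by omega), image_univ]

end IsLinearNV

end LinearTorus

theorem statement_9 {q n : ℕ} (hn : 0 < n) (A : Matrix (Fin q) (Fin q) ℤ) (l : Fin q → ℤ)
    (hrow : ∀ i j, A i j ≡ l j [ZMOD (n : ℤ)])
    (f : NValuedMap (Torus q) (Torus q) n) (hf : IsLinearNV n A f) :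
    HasProperPartition f ↔ ∃ m : ℤ, 1 < m ∧ m ∣ (n : ℤ) ∧ ∀ j, m ∣ l j := by
  refine ⟨hf.exists_dvd_of_hasProperPartition hn.ne' hrow, ?_⟩
  rintro ⟨m, hm, hmn, hml⟩
  lift m to ℕ using by omega
  obtain ⟨K, rfl⟩ := Int.natCast_dvd_natCast.1 hmn
  exact hf.hasProperPartition_of_dvd (by omega) rfl (by rintro rfl; simp at hn) hrow hml
end
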